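/- Let f : I → [0,∞) be three times differentiable on the interior of interval I, a, b in the interior with a < b, f''' integrable on [a,b], and let q ≥ 1. Suppose |f'''|^q is log-convex on [a,b] and |f'''(a)|, |f'''(b)| are positive and distinct. Then |(1/(b-a))·∫_a^b f(x) dx − f((a+b)/2) − ((b-a)²/24)·f''((a+b)/2)| ≤ ((b-a)³/96)·(1/4)^{1−1/q}·[ |f'''(b)|·(μ_{K,q})^{1/q} + |f'''(a)|·(μ_{M,q})^{1/q} ], where for positive c ≠ 1, μ_{c,q} = 2·c^{q/2}·(q·ln c − 6)/(q·ln c)² + 48·c^{q/2}·(q·ln c − 2)/(q·ln c)⁴ + 96/(q·ln c)⁴, and K = |f'''(a)|/|f'''(b)|, M = |f'''(b)|/|f'''(a)|. -/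

import Mathlib

open MeasureTheory intervalIntegral

noncomputable def muq (c q : ℝ) : ℝ :=
  2 * c ^ (q / 2) * (q * Real.log c - 6) / (q * Real.log c) ^ 2
    + 48 * c ^ (q / 2) * (q * Real.log c - 2) / (q * Real.log c) ^ 4
    + 96 / (q * Real.log c) ^ 4

/-!
Write `h = b - a` and `m = (a + b) / 2`. Expanding `∫ f` by Taylor's formula with integral
remainder at `m` towards `b` and towards `a`, the first-order terms cancel and the error equals
`(R_b - R_a) / 6` with `R_b = ∫₀^{h/2} s³ f'''(b - s) ds` and `R_a = ∫₀^{h/2} s³ f'''(a + s) ds`.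
Log-convexity of `|f'''|^q` along `[a, b]` gives `|f'''(b - s)|^q ≤ |f'''(b)|^q K^{q s / h}` and
`|f'''(a + s)|^q ≤ |f'''(a)|^q M^{q s / h}`. Hölder's inequality with weight `s³` bounds `|R_b|` by
`(∫ s³)^{1 - 1/q} (∫ s³ |f'''(b - s)|^q)^{1/q}`, and the resulting exponential moment is explicit:
`μ_{c,q} = 16 ∫₀^{1/2} u³ c^{q u} du`.
-/

open Set Real

theorem integral_sub_pow_succ_mul_deriv {u u' : ℝ → ℝ} {m x : ℝ} (n : ℕ)
    (hu : ∀ t ∈ uIcc m x, HasDerivAt u (u' t) t) (hu' : IntervalIntegrable u' volume m x) :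
    ∫ t in m..x, (x - t) ^ (n + 1) * u' t =
      (n + 1) * (∫ t in m..x, (x - t) ^ n * u t) - (x - m) ^ (n + 1) * u m := by
  have hw : ∀ t ∈ uIcc m x,
      HasDerivAt (fun t => (x - t) ^ (n + 1)) (-((n + 1) * (x - t) ^ n)) t := fun t _ =>
    (((hasDerivAt_id' t).const_sub x).fun_pow (n + 1)).congr_deriv (by push_cast; ring)
  rw [intervalIntegral.integral_mul_deriv_eq_deriv_mul hw hu
    ((by fun_prop : Continuous _).intervalIntegrable _ _) hu']
  simp only [sub_self, zero_pow (Nat.succ_ne_zero n), zero_mul, neg_mul,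
    intervalIntegral.integral_neg, mul_assoc, intervalIntegral.integral_const_mul]
  ring

theorem integral_eq_taylor_add_remainder {g g' g'' g''' : ℝ → ℝ} {m x : ℝ}
    (h1 : ∀ t ∈ uIcc m x, HasDerivAt g (g' t) t) (h2 : ∀ t ∈ uIcc m x, HasDerivAt g' (g'' t) t)
    (h3 : ∀ t ∈ uIcc m x, HasDerivAt g'' (g''' t) t) (h3' : IntervalIntegrable g''' volume m x) :
    ∫ t in m..x, g t = (x - m) * g m + (x - m) ^ 2 / 2 * g' m + (x - m) ^ 3 / 6 * g'' m
      + (∫ t in m..x, (x - t) ^ 3 * g''' t) / 6 := by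
  have hcont : ∀ {v v' : ℝ → ℝ}, (∀ t ∈ uIcc m x, HasDerivAt v (v' t) t) →
      IntervalIntegrable v volume m x := fun hv =>
    ContinuousOn.intervalIntegrable fun t ht => (hv t ht).continuousAt.continuousWithinAt
  have e3 := integral_sub_pow_succ_mul_deriv 2 h3 h3'
  have e2 := integral_sub_pow_succ_mul_deriv 1 h2 (hcont h3)
  have e1 := integral_sub_pow_succ_mul_deriv 0 h1 (hcont h2)
  norm_num at e1 e2 e3
  linear_combination -e3 / 6 - e2 / 2 - e1

theorem integral_sub_midpoint_eq {f f' f'' f''' : ℝ → ℝ} {a b : ℝ}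
    (h1 : ∀ t ∈ uIcc a b, HasDerivAt f (f' t) t) (h2 : ∀ t ∈ uIcc a b, HasDerivAt f' (f'' t) t)
    (h3 : ∀ t ∈ uIcc a b, HasDerivAt f'' (f''' t) t) (h3' : IntervalIntegrable f''' volume a b) :
    ∫ x in a..b, (f x - f ((a + b) / 2) - (b - a) ^ 2 / 24 * f'' ((a + b) / 2)) =
      ((∫ s in (0 : ℝ)..(b - a) / 2, s ^ 3 * f''' (b - s))
        - ∫ s in (0 : ℝ)..(b - a) / 2, s ^ 3 * f''' (a + s)) / 6 := by
  set m := (a + b) / 2 with hm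
  have hm_mem : m ∈ uIcc a b := by
    rw [mem_uIcc]
    rcases le_total a b with h | h <;> [left; right] <;> constructor <;> linarith
  have hsub_b : uIcc m b ⊆ uIcc a b := uIcc_subset_uIcc hm_mem right_mem_uIcc
  have hsub_a : uIcc m a ⊆ uIcc a b := uIcc_subset_uIcc hm_mem left_mem_uIcc
  have hf : IntervalIntegrable f volume a b :=
    ContinuousOn.intervalIntegrable fun t ht => (h1 t ht).continuousAt.continuousWithinAt
  have taylor_b := integral_eq_taylor_add_remainder (fun t ht => h1 t (hsub_b ht))
    (fun t ht => h2 t (hsub_b ht)) (fun t ht => h3 t (hsub_b ht)) (h3'.mono_set hsub_b)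
  have taylor_a := integral_eq_taylor_add_remainder (fun t ht => h1 t (hsub_a ht))
    (fun t ht => h2 t (hsub_a ht)) (fun t ht => h3 t (hsub_a ht)) (h3'.mono_set hsub_a)
  have remainder_b : ∫ t in m..b, (b - t) ^ 3 * f''' t =
      ∫ s in (0 : ℝ)..(b - a) / 2, s ^ 3 * f''' (b - s) := by
    have := integral_comp_sub_left (fun t => (b - t) ^ 3 * f''' t) b (a := 0) (b := (b - a) / 2)
    simp only [sub_sub_cancel, sub_zero] at this
    rw [this, hm]
    congr 1
    ring
  have remainder_a : ∫ t in m..a, (a - t) ^ 3 * f''' t =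
      ∫ s in (0 : ℝ)..(b - a) / 2, s ^ 3 * f''' (a + s) := by
    have := integral_comp_add_left (fun t => (t - a) ^ 3 * f''' t) a (a := 0) (b := (b - a) / 2)
    simp only [add_sub_cancel_left, add_zero] at this
    rw [this, integral_symm, ← intervalIntegral.integral_neg, show a + (b - a) / 2 = m by ring]
    congr 1
    funext t
    ring
  rw [intervalIntegral.integral_sub (hf.sub intervalIntegrable_const) intervalIntegrable_const,
    intervalIntegral.integral_sub hf intervalIntegrable_const, intervalIntegral.integral_const,
    intervalIntegral.integral_const, smul_eq_mul, smul_eq_mul,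
    ← integral_interval_sub_left (hf.mono_set hsub_b) (hf.mono_set hsub_a), taylor_b, taylor_a,
    remainder_b, remainder_a, hm]
  ring

theorem integral_pow_three_mul_exp {l : ℝ} (hl : l ≠ 0) :
    ∫ u in (0 : ℝ)..1 / 2, u ^ 3 * exp (l * u) =
      exp (l / 2) * (1 / (8 * l) - 3 / (4 * l ^ 2) + 3 / l ^ 3 - 6 / l ^ 4) + 6 / l ^ 4 := by
  have hderiv : ∀ u ∈ uIcc (0 : ℝ) (1 / 2), HasDerivAt
      (fun u => exp (l * u) * (u ^ 3 / l - 3 * u ^ 2 / l ^ 2 + 6 * u / l ^ 3 - 6 / l ^ 4))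
      (u ^ 3 * exp (l * u)) u := by
    intro u _
    have hid := hasDerivAt_id' u
    refine ((hid.const_mul l).exp.fun_mul (((((hid.fun_pow 3).div_const l).fun_sub
        (((hid.fun_pow 2).const_mul 3).div_const (l ^ 2))).fun_add
        ((hid.const_mul 6).div_const (l ^ 3))).sub_const (6 / l ^ 4))).congr_deriv ?_
    field_simp
    ring
  rw [integral_eq_sub_of_hasDerivAt hderiv ((by fun_prop : Continuous _).intervalIntegrable _ _),
    mul_zero, exp_zero]
  field_simp
  ring_nf

theorem muq_eq_integral {K q : ℝ} (hK : 0 < K) (hK1 : K ≠ 1) (hq : q ≠ 0) :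
    muq K q = 16 * ∫ u in (0 : ℝ)..1 / 2, u ^ 3 * K ^ (q * u) := by
  have hl : q * log K ≠ 0 := mul_ne_zero hq (log_ne_zero_of_pos_of_ne_one hK hK1)
  have hexp : ∀ x, K ^ x = exp (log K * x) := fun x => rpow_def_of_pos hK x
  simp only [hexp, ← mul_assoc, mul_comm (log K) q]
  rw [integral_pow_three_mul_exp hl, muq, hexp, mul_div_assoc', mul_comm (log K) q]
  field_simp
  ring

theorem muq_nonneg {K q : ℝ} (hK : 0 < K) (hK1 : K ≠ 1) (hq : q ≠ 0) : 0 ≤ muq K q := by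
  rw [muq_eq_integral hK hK1 hq]
  refine mul_nonneg (by norm_num) (integral_nonneg (by norm_num) fun u hu => ?_)
  have : 0 ≤ u := hu.1
  positivity

theorem integral_pow_three_mul_rpow_div {h K q : ℝ} (hh : h ≠ 0) (hK : 0 < K) (hK1 : K ≠ 1)
    (hq : q ≠ 0) :
    ∫ s in (0 : ℝ)..h / 2, s ^ 3 * K ^ (q * (s / h)) = h ^ 4 / 16 * muq K q := by
  have hscale : ∀ s, s ^ 3 * K ^ (q * (s / h)) = h ^ 3 * ((s / h) ^ 3 * K ^ (q * (s / h))) := by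
    intro s
    field_simp
  have hsub := integral_comp_div (fun u => u ^ 3 * K ^ (q * u)) hh (a := 0) (b := h / 2)
  rw [zero_div, div_div_cancel_left' hh, ← one_div, smul_eq_mul] at hsub
  simp only [hscale, intervalIntegral.integral_const_mul, hsub, muq_eq_integral hK hK1 hq]
  ring

theorem memLp_ofReal_of_integrable_rpow {α : Type*} [MeasurableSpace α] {μ : Measure α}
    {H : α → ℝ} {r : ℝ} (hr : 0 < r) (hH : 0 ≤ᵐ[μ] H) (hH_meas : AEStronglyMeasurable H μ)
    (hint : Integrable (fun x => H x ^ r) μ) : MemLp H (ENNReal.ofReal r) μ := by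
  rw [← integrable_norm_rpow_iff hH_meas (by simpa using hr) ENNReal.ofReal_ne_top,
    ENNReal.toReal_ofReal hr.le]
  refine hint.congr ?_
  filter_upwards [hH] with x hx
  rw [Real.norm_of_nonneg hx]

theorem integral_mul_le_integral_rpow_mul_integral_mul_rpow {α : Type*} [MeasurableSpace α]
    {μ : Measure α} {w φ : α → ℝ} {q : ℝ} (hq : 1 ≤ q) (hw : 0 ≤ᵐ[μ] w) (hφ : 0 ≤ᵐ[μ] φ)
    (hw_int : Integrable w μ) (hφ_meas : AEStronglyMeasurable φ μ)
    (hwφ : Integrable (fun x => w x * φ x ^ q) μ) :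
    ∫ x, w x * φ x ∂μ ≤ (∫ x, w x ∂μ) ^ (1 - 1 / q) * (∫ x, w x * φ x ^ q ∂μ) ^ (1 / q) := by
  rcases hq.eq_or_lt with rfl | hq
  · simp
  set p := q.conjExponent
  have hpq : p.HolderConjugate q := (Real.HolderConjugate.conjExponent hq).symm
  set F := fun x => w x ^ (1 / p)
  set G := fun x => w x ^ (1 / q) * φ x
  have hF : 0 ≤ᵐ[μ] F := by
    filter_upwards [hw] with x hx using Real.rpow_nonneg hx _
  have hG : 0 ≤ᵐ[μ] G := by
    filter_upwards [hw, hφ] with x hx hφx using mul_nonneg (Real.rpow_nonneg hx _) hφx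
  have hFp : (fun x => F x ^ p) =ᵐ[μ] w := by
    filter_upwards [hw] with x hx
    simp only [F, ← Real.rpow_mul hx, one_div_mul_cancel hpq.ne_zero, Real.rpow_one]
  have hGq : (fun x => G x ^ q) =ᵐ[μ] fun x => w x * φ x ^ q := by
    filter_upwards [hw, hφ] with x hx hφx
    simp only [G, Real.mul_rpow (Real.rpow_nonneg hx _) hφx, ← Real.rpow_mul hx,
      one_div_mul_cancel hpq.symm.ne_zero, Real.rpow_one]
  have hFG : (fun x => F x * G x) =ᵐ[μ] fun x => w x * φ x := by
    filter_upwards [hw] with x hx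
    have hexp : 1 / p + 1 / q = 1 := by rw [one_div, one_div, hpq.inv_add_inv_eq_one]
    rw [← mul_assoc, ← Real.rpow_add' hx (by rw [hexp]; exact one_ne_zero), hexp, Real.rpow_one]
  have hw_meas := hw_int.aestronglyMeasurable.aemeasurable
  have hF_meas : AEStronglyMeasurable F μ := (hw_meas.pow_const _).aestronglyMeasurable
  have hG_meas : AEStronglyMeasurable G μ :=
    (hw_meas.pow_const _).aestronglyMeasurable.mul hφ_meas
  have hFmem := memLp_ofReal_of_integrable_rpow hpq.pos hF hF_meas (hw_int.congr hFp.symm)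
  have hGmem := memLp_ofReal_of_integrable_rpow hpq.symm.pos hG hG_meas (hwφ.congr hGq.symm)
  calc ∫ x, w x * φ x ∂μ = ∫ x, F x * G x ∂μ := integral_congr_ae hFG.symm
    _ ≤ (∫ x, F x ^ p ∂μ) ^ (1 / p) * (∫ x, G x ^ q ∂μ) ^ (1 / q) :=
      integral_mul_le_Lp_mul_Lq_of_nonneg hpq hF hG hFmem hGmem
    _ = (∫ x, w x ∂μ) ^ (1 - 1 / q) * (∫ x, w x * φ x ^ q ∂μ) ^ (1 / q) := by
      rw [integral_congr_ae hFp, integral_congr_ae hGq, one_div p, one_div q,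
        hpq.symm.one_sub_inv]

theorem mul_rpow_one_sub_one_div_mul_rpow_one_div {c d B μ q : ℝ} (hc : 0 ≤ c) (hd : 0 ≤ d)
    (hB : 0 ≤ B) (hμ : 0 ≤ μ) (hq : q ≠ 0) :
    (c * d) ^ (1 - 1 / q) * (B ^ q * (c * μ)) ^ (1 / q) =
      c * d ^ (1 - 1 / q) * (B * μ ^ (1 / q)) := by
  rw [Real.mul_rpow hc hd, Real.mul_rpow (by positivity) (by positivity), Real.mul_rpow hc hμ,
    ← Real.rpow_mul hB, mul_one_div_cancel hq, Real.rpow_one]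
  have hsplit : c ^ (1 - 1 / q) * c ^ (1 / q) = c := by
    rw [← Real.rpow_add' hc (by norm_num), sub_add_cancel, Real.rpow_one]
  linear_combination (d ^ (1 - 1 / q) * B * μ ^ (1 / q)) * hsplit

theorem abs_integral_pow_three_mul_le {ψ : ℝ → ℝ} {h B K q : ℝ} (hh : 0 < h) (hB : 0 ≤ B)
    (hK : 0 < K) (hK1 : K ≠ 1) (hq : 1 ≤ q)
    (hψ : AEStronglyMeasurable ψ (volume.restrict (Ioc 0 (h / 2))))
    (hbd : ∀ s ∈ Icc 0 (h / 2), |ψ s| ^ q ≤ B ^ q * K ^ (q * (s / h))) :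
    |∫ s in (0 : ℝ)..h / 2, s ^ 3 * ψ s| ≤
      h ^ 4 / 16 * (1 / 4) ^ (1 - 1 / q) * (B * muq K q ^ (1 / q)) := by
  have hq0 : q ≠ 0 := by positivity
  have hr : (0 : ℝ) ≤ h / 2 := by positivity
  have hmajorant : Continuous fun s : ℝ => s ^ 3 * (B ^ q * K ^ (q * (s / h))) := by
    fun_prop (disch := positivity)
  have hweight : ∫ s in Ioc 0 (h / 2), s ^ 3 = h ^ 4 / 64 := by
    rw [← integral_of_le hr, integral_pow]
    ring
  have hmajorant_eq : ∫ s in Ioc 0 (h / 2), s ^ 3 * (B ^ q * K ^ (q * (s / h))) =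
      B ^ q * (h ^ 4 / 16 * muq K q) := by
    simp only [mul_left_comm _ (B ^ q)]
    rw [MeasureTheory.integral_const_mul, ← integral_of_le hr,
      integral_pow_three_mul_rpow_div hh.ne' hK hK1 hq0]
  have hdom : ∀ s ∈ Ioc 0 (h / 2),
      s ^ 3 * |ψ s| ^ q ≤ s ^ 3 * (B ^ q * K ^ (q * (s / h))) := fun s hs =>
    mul_le_mul_of_nonneg_left (hbd s (Ioc_subset_Icc_self hs)) (pow_nonneg hs.1.le 3)
  have hint : IntegrableOn (fun s => s ^ 3 * |ψ s| ^ q) (Ioc 0 (h / 2)) := by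
    refine Integrable.mono' hmajorant.integrableOn_Ioc ?_ ?_
    · exact (continuous_pow 3).aestronglyMeasurable.mul
        (hψ.norm.aemeasurable.pow_const q).aestronglyMeasurable
    · filter_upwards [ae_restrict_mem measurableSet_Ioc] with s hs
      rw [Real.norm_of_nonneg (by have := hs.1.le; positivity)]
      exact hdom s hs
  rw [integral_of_le hr]
  calc |∫ s in Ioc 0 (h / 2), s ^ 3 * ψ s|
      ≤ ∫ s in Ioc 0 (h / 2), s ^ 3 * |ψ s| := by
        refine MeasureTheory.abs_integral_le_integral_abs.trans_eq
          (setIntegral_congr_fun measurableSet_Ioc fun s hs => ?_)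
        rw [abs_mul, abs_of_nonneg (pow_nonneg hs.1.le 3)]
    _ ≤ (∫ s in Ioc 0 (h / 2), s ^ 3) ^ (1 - 1 / q) *
          (∫ s in Ioc 0 (h / 2), s ^ 3 * |ψ s| ^ q) ^ (1 / q) :=
        integral_mul_le_integral_rpow_mul_integral_mul_rpow hq
          (ae_restrict_of_forall_mem measurableSet_Ioc fun s hs => pow_nonneg hs.1.le 3)
          (ae_of_all _ fun s => abs_nonneg _) (continuous_pow 3).integrableOn_Ioc hψ.norm hint
    _ ≤ (h ^ 4 / 16 * (1 / 4)) ^ (1 - 1 / q) * (B ^ q * (h ^ 4 / 16 * muq K q)) ^ (1 / q) := by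
        rw [hweight, ← hmajorant_eq, show h ^ 4 / 64 = h ^ 4 / 16 * (1 / 4) by ring]
        refine mul_le_mul_of_nonneg_left (Real.rpow_le_rpow ?_ ?_ (by positivity)) (by positivity)
        · exact setIntegral_nonneg measurableSet_Ioc fun s hs => by have := hs.1.le; positivity
        · exact setIntegral_mono_on hint hmajorant.integrableOn_Ioc measurableSet_Ioc hdom
    _ = h ^ 4 / 16 * (1 / 4) ^ (1 - 1 / q) * (B * muq K q ^ (1 / q)) :=
        mul_rpow_one_sub_one_div_mul_rpow_one_div (by positivity) (by norm_num) hB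
          (muq_nonneg hK hK1 hq0) hq0

theorem abs_integral_sub_midpoint_le {f f' f'' f''' : ℝ → ℝ} {a b q A B : ℝ} (hab : a < b)
    (h1 : ∀ t ∈ uIcc a b, HasDerivAt f (f' t) t) (h2 : ∀ t ∈ uIcc a b, HasDerivAt f' (f'' t) t)
    (h3 : ∀ t ∈ uIcc a b, HasDerivAt f'' (f''' t) t) (h3' : IntervalIntegrable f''' volume a b)
    (hq : 1 ≤ q) (hA : 0 < A) (hB : 0 < B) (hAB : A ≠ B)
    (hbd_b : ∀ s ∈ Icc 0 ((b - a) / 2),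
      |f''' (b - s)| ^ q ≤ B ^ q * (A / B) ^ (q * (s / (b - a))))
    (hbd_a : ∀ s ∈ Icc 0 ((b - a) / 2),
      |f''' (a + s)| ^ q ≤ A ^ q * (B / A) ^ (q * (s / (b - a)))) :
    |(1 / (b - a)) * ∫ x in a..b, f x - f ((a + b) / 2) - ((b - a) ^ 2 / 24) * f'' ((a + b) / 2)|
      ≤ ((b - a) ^ 3 / 96) * ((1 : ℝ) / 4) ^ (1 - 1 / q) *
        (B * (muq (A / B) q) ^ (1 / q) + A * (muq (B / A) q) ^ (1 / q)) := by
  have hh : 0 < b - a := sub_pos.2 hab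
  have hhalf : uIcc 0 ((b - a) / 2) ⊆ uIcc 0 (b - a) :=
    uIcc_subset_uIcc left_mem_uIcc (by rw [mem_uIcc]; left; constructor <;> linarith)
  have hR_b := abs_integral_pow_three_mul_le hh hB.le (div_pos hA hB) (div_ne_one_of_ne hAB) hq
    ((h3'.comp_sub_left b).symm.mono_set (by simpa using hhalf)).1.aestronglyMeasurable hbd_b
  have hR_a := abs_integral_pow_three_mul_le hh hA.le (div_pos hB hA) (div_ne_one_of_ne hAB.symm) hq
    ((h3'.comp_add_left a).mono_set (by simpa using hhalf)).1.aestronglyMeasurable hbd_a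
  rw [integral_sub_midpoint_eq h1 h2 h3 h3', abs_mul, abs_of_pos (one_div_pos.2 hh), abs_div,
    abs_of_pos (by norm_num : (0 : ℝ) < 6)]
  calc _ ≤ 1 / (b - a) * ((|∫ s in (0 : ℝ)..(b - a) / 2, s ^ 3 * f''' (b - s)|
          + |∫ s in (0 : ℝ)..(b - a) / 2, s ^ 3 * f''' (a + s)|) / 6) := by
        gcongr
        exact abs_sub _ _
    _ ≤ 1 / (b - a) * (((b - a) ^ 4 / 16 * (1 / 4) ^ (1 - 1 / q) * (B * muq (A / B) q ^ (1 / q))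
          + (b - a) ^ 4 / 16 * (1 / 4) ^ (1 - 1 / q) * (A * muq (B / A) q ^ (1 / q))) / 6) := by
        gcongr
    _ = _ := by
        field_simp
        ring

theorem rpow_rpow_mul_rpow_rpow_one_sub {A B : ℝ} (q α : ℝ) (hA : 0 ≤ A) (hB : 0 < B) :
    (A ^ q) ^ α * (B ^ q) ^ (1 - α) = B ^ q * (A / B) ^ (q * α) := by
  rw [← Real.rpow_mul hA, ← Real.rpow_mul hB.le, Real.div_rpow hA hB.le,
    show q * (1 - α) = q - q * α by ring, Real.rpow_sub hB]
  have : B ^ (q * α) ≠ 0 := by positivity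
  field_simp

theorem thm_2_3_general
    (I : Set ℝ) (hI : I.OrdConnected)
    (f f' f'' f''' : ℝ → ℝ)
    (a b : ℝ) (ha : a ∈ interior I) (hb : b ∈ interior I) (hab : a < b)
    (hf' : ∀ x ∈ interior I, HasDerivAt f (f' x) x)
    (hf'' : ∀ x ∈ interior I, HasDerivAt f' (f'' x) x)
    (hf''' : ∀ x ∈ interior I, HasDerivAt f'' (f''' x) x)
    (hint : IntegrableOn f''' (Set.Icc a b))
    (q : ℝ) (hq : 1 ≤ q)
    (hlog : ∀ x ∈ Set.Icc a b, ∀ y ∈ Set.Icc a b, ∀ α ∈ Set.Icc (0:ℝ) 1,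
      |f''' (α * x + (1 - α) * y)| ^ q ≤ (|f''' x| ^ q) ^ α * (|f''' y| ^ q) ^ (1 - α))
    (hA : 0 < |f''' a|) (hB : 0 < |f''' b|) (hne : |f''' a| ≠ |f''' b|) :
    |(1 / (b - a)) * ∫ x in a..b, f x - f ((a + b) / 2)
        - ((b - a) ^ 2 / 24) * f'' ((a + b) / 2)|
    ≤ ((b - a) ^ 3 / 96) * ((1:ℝ) / 4) ^ (1 - 1 / q) *
        (|f''' b| * (muq (|f''' a| / |f''' b|) q) ^ (1 / q)
          + |f''' a| * (muq (|f''' b| / |f''' a|) q) ^ (1 / q)) := by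
  have hh : 0 < b - a := sub_pos.2 hab
  have hsub : uIcc a b ⊆ interior I := uIcc_of_le hab.le ▸ hI.interior.out ha hb
  have hα : ∀ s ∈ Icc 0 ((b - a) / 2), s / (b - a) ∈ Icc (0 : ℝ) 1 := fun s hs =>
    ⟨div_nonneg hs.1 hh.le, (div_le_one hh).2 (by linarith [hs.2])⟩
  refine abs_integral_sub_midpoint_le hab (fun t ht => hf' t (hsub ht))
    (fun t ht => hf'' t (hsub ht)) (fun t ht => hf''' t (hsub ht))
    ((intervalIntegrable_iff_integrableOn_Icc_of_le hab.le).2 hint) hq hA hB hne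
    (fun s hs => ?_) (fun s hs => ?_)
  · have := hlog a (left_mem_Icc.2 hab.le) b (right_mem_Icc.2 hab.le) _ (hα s hs)
    rwa [rpow_rpow_mul_rpow_rpow_one_sub _ _ hA.le hB,
      show s / (b - a) * a + (1 - s / (b - a)) * b = b - s by field_simp; ring] at this
  · have := hlog b (right_mem_Icc.2 hab.le) a (left_mem_Icc.2 hab.le) _ (hα s hs)
    rwa [rpow_rpow_mul_rpow_rpow_one_sub _ _ hB.le hA,
      show s / (b - a) * b + (1 - s / (b - a)) * a = a + s by field_simp; ring] at this

theorem thm_2_3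
    (I : Set ℝ) (hI : I.OrdConnected)
    (f f' f'' f''' : ℝ → ℝ)
    (hfpos : ∀ x ∈ I, 0 ≤ f x)
    (a b : ℝ) (ha : a ∈ interior I) (hb : b ∈ interior I) (hab : a < b)
    (hf' : ∀ x ∈ interior I, HasDerivAt f (f' x) x)
    (hf'' : ∀ x ∈ interior I, HasDerivAt f' (f'' x) x)
    (hf''' : ∀ x ∈ interior I, HasDerivAt f'' (f''' x) x)
    (hint : IntegrableOn f''' (Set.Icc a b))
    (q : ℝ) (hq : 1 ≤ q)
    (hlog : ∀ x ∈ Set.Icc a b, ∀ y ∈ Set.Icc a b, ∀ α ∈ Set.Icc (0:ℝ) 1,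
      |f''' (α * x + (1 - α) * y)| ^ q ≤ (|f''' x| ^ q) ^ α * (|f''' y| ^ q) ^ (1 - α))
    (hA : 0 < |f''' a|) (hB : 0 < |f''' b|) (hne : |f''' a| ≠ |f''' b|) :
    |(1 / (b - a)) * ∫ x in a..b, f x - f ((a + b) / 2)
        - ((b - a) ^ 2 / 24) * f'' ((a + b) / 2)|
    ≤ ((b - a) ^ 3 / 96) * ((1:ℝ) / 4) ^ (1 - 1 / q) *
        (|f''' b| * (muq (|f''' a| / |f''' b|) q) ^ (1 / q)
          + |f''' a| * (muq (|f''' b| / |f''' a|) q) ^ (1 / q)) :=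
  thm_2_3_general I hI f f' f'' f''' a b ha hb hab hf' hf'' hf''' hint q hq hlog hA hB hne
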